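/- Explicit SLD and value of the SLD quantum information (Proposition): In the spectral-family setup, define λ̃_θ = Σ_{k: p_k>0} (p_k'(θ)/p_k(θ)) |w_k(θ)⟩⟨w_k(θ)| + 2 Σ_{j≠k, p_j+p_k>0} ((p_j(θ)−p_k(θ))/(p_j(θ)+p_k(θ))) ⟨w_j'(θ), w_k(θ)⟩ |w_j(θ)⟩⟨w_k(θ)|. Then λ̃_θ is Hermitian, it satisfies the SLD equation dρ_θ/dθ = (1/2)(ρ_θ λ̃_θ + λ̃_θ ρ_θ), and tr(ρ_θ λ̃_θ²) = H(θ). -/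

import Mathlib

/-!
Write everything in the orthonormal frame `U = [w_1(θ) ⋯ w_d(θ)]`: `ρ_θ = U D Uᴴ` with
`D = diag p(θ)`, and `λ̃_θ = U L Uᴴ` for an explicit coefficient matrix `L`. Differentiating
`Uᴴ U = 1` shows that `K = (⟨w_a', w_b⟩)_{ab}` is skew-Hermitian, and then `dU/dθ = -U K`, so
`dρ/dθ = U (D' + D K - K D) Uᴴ`. Hence all three claims reduce to entrywise identities for `L`
in this frame: `L` is Hermitian, `(D L + L D)/2 = D' + D K - K D`, and
`tr(D L L) = Σ_a p_a L_aa² + Σ_{a<b} (p_a + p_b) |L_ab|²`, which is `H(θ)`.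
-/

open scoped BigOperators Matrix

noncomputable section

/-- The Hermitian inner product on `Fin d → ℂ`, conjugate-linear in the first argument. -/
def inn {d : ℕ} (x y : Fin d → ℂ) : ℂ := ∑ i, (starRingEnd ℂ) (x i) * y i

open Matrix Finset

theorem Finset.sum_sum_eq_sum_diag_add_sum_lt {ι M : Type*} [Fintype ι] [LinearOrder ι]
    [AddCommMonoid M] (f : ι → ι → M) :
    ∑ a, ∑ b, f a b = ∑ a, f a a + ∑ a, ∑ b, if a < b then f a b + f b a else 0 := by
  have hsplit : ∀ a b, f a b = (if a = b then f a b else 0) + ((if a < b then f a b else 0) +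
      if b < a then f a b else 0) := by
    intro a b
    rcases lt_trichotomy a b with h | rfl | h
    · simp [h, h.ne, h.not_gt]
    · simp
    · simp [h, h.ne', h.not_gt]
  conv_lhs => enter [2, a, 2, b]; rw [hsplit a b]
  simp only [sum_add_distrib, sum_ite_eq, mem_univ, if_true]
  rw [sum_comm (f := fun a b => if b < a then f a b else 0)]
  simp only [← sum_add_distrib, ← ite_add_zero]

lemma Matrix.star_apply_of_conjTranspose_eq_neg {ι : Type*} {K : Matrix ι ι ℂ} (hK : Kᴴ = -K)
    (a b : ι) : star (K b a) = -K a b := by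
  rw [← conjTranspose_apply, hK, neg_apply]

lemma hasDerivAt_sum_smul_vecMulVec_apply {ι n : Type*} [Fintype ι] [Fintype n]
    {p : ι → ℝ → ℝ} {w : ι → ℝ → n → ℂ} {p' : ι → ℝ} {w' : ι → n → ℂ} {t : ℝ}
    (hp : ∀ k, HasDerivAt (p k) (p' k) t) (hw : ∀ k, HasDerivAt (w k) (w' k) t) (i j : n) :
    HasDerivAt (fun s => (∑ k, (p k s : ℂ) • vecMulVec (w k s) (star (w k s))) i j)
      ((∑ k, ((p' k : ℂ) • vecMulVec (w k t) (star (w k t)) + (p k t : ℂ) •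
        (vecMulVec (w' k) (star (w k t)) + vecMulVec (w k t) (star (w' k))))) i j) t := by
  simp only [Matrix.sum_apply, Matrix.add_apply, Matrix.smul_apply, vecMulVec_apply,
    Pi.star_apply, smul_eq_mul]
  refine HasDerivAt.fun_sum fun k _ => ?_
  have hwi := hasDerivAt_pi.mp (hw k) i
  have hwj := (hasDerivAt_pi.mp (hw k) j).star
  exact (hp k).ofReal_comp.fun_mul (hwi.fun_mul hwj)

lemma half_anticommutator_conj {n : Type*} [Fintype n] [DecidableEq n]
    {U V D D' L K : Matrix n n ℂ} (hU : Uᴴ * U = 1) (hVU : Vᴴ * U = K) (hK : Kᴴ = -K)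
    (hL : (1 / 2 : ℂ) • (D * L + L * D) = D' + (D * K - K * D)) :
    U * D' * Uᴴ + V * D * Uᴴ + U * D * Vᴴ =
      (1 / 2 : ℂ) • (U * D * Uᴴ * (U * L * Uᴴ) + U * L * Uᴴ * (U * D * Uᴴ)) := by
  have hU' : U * Uᴴ = 1 := mul_eq_one_comm.mp hU
  have hcancel (X : Matrix n n ℂ) : Uᴴ * (U * X) = X := by rw [← Matrix.mul_assoc, hU, one_mul]
  -- expand the columns of `V` in the orthonormal frame `U`
  have hV : V = -(U * K) := by
    calc V = U * Uᴴ * V := by rw [hU', one_mul]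
      _ = U * (Vᴴ * U)ᴴ := by rw [conjTranspose_mul, conjTranspose_conjTranspose, Matrix.mul_assoc]
      _ = -(U * K) := by rw [hVU, hK, Matrix.mul_neg]
  have hVH : Vᴴ = K * Uᴴ := by
    rw [hV, conjTranspose_neg, conjTranspose_mul, hK, Matrix.neg_mul, neg_neg]
  calc U * D' * Uᴴ + V * D * Uᴴ + U * D * Vᴴ = U * (D' + (D * K - K * D)) * Uᴴ := by
        rw [hVH, hV]
        simp only [Matrix.mul_add, Matrix.add_mul, Matrix.mul_sub, Matrix.sub_mul,
          Matrix.neg_mul, Matrix.mul_assoc]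
        abel
    _ = U * ((1 / 2 : ℂ) • (D * L + L * D)) * Uᴴ := by rw [hL]
    _ = _ := by
        simp only [Matrix.mul_smul, Matrix.smul_mul, Matrix.mul_add, Matrix.add_mul,
          Matrix.mul_assoc, hcancel]

lemma trace_conj_mul_conj_mul_conj {n : Type*} [Fintype n] [DecidableEq n]
    {U A B C : Matrix n n ℂ} (hU : Uᴴ * U = 1) :
    (U * A * Uᴴ * (U * B * Uᴴ) * (U * C * Uᴴ)).trace = (A * B * C).trace := by
  have hcancel (X : Matrix n n ℂ) : Uᴴ * (U * X) = X := by rw [← Matrix.mul_assoc, hU, one_mul]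
  simp only [Matrix.mul_assoc, hcancel]
  rw [trace_mul_comm, Matrix.mul_assoc, Matrix.mul_assoc, Matrix.mul_assoc, hU, Matrix.mul_one]

section SLD

variable {ι : Type*} [DecidableEq ι]

/-- The matrix of `λ̃_θ` in the eigenframe `w(θ)`, where `K a b` stands for `⟨w_a'(θ), w_b(θ)⟩`. -/
def sldMatrix (P P' : ι → ℝ) (K : Matrix ι ι ℂ) : Matrix ι ι ℂ :=
  diagonal (fun a => if 0 < P a then ((P' a / P a : ℝ) : ℂ) else 0) +
    (2 : ℂ) • Matrix.of fun a b =>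
      if a ≠ b ∧ 0 < P a + P b then (((P a - P b) / (P a + P b) : ℝ) : ℂ) * K a b else 0

variable {P P' : ι → ℝ} {K : Matrix ι ι ℂ}

lemma sldMatrix_apply_self (a : ι) :
    sldMatrix P P' K a a = if 0 < P a then ((P' a / P a : ℝ) : ℂ) else 0 := by
  simp [sldMatrix]

lemma sldMatrix_apply_of_ne {a b : ι} (hab : a ≠ b) :
    sldMatrix P P' K a b =
      if 0 < P a + P b then 2 * (((P a - P b) / (P a + P b) : ℝ) : ℂ) * K a b else 0 := by
  simp [sldMatrix, hab, mul_assoc]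

lemma isHermitian_sldMatrix (hK : Kᴴ = -K) : (sldMatrix P P' K).IsHermitian := by
  ext a b
  rw [conjTranspose_apply]
  rcases eq_or_ne a b with rfl | hab
  · rw [sldMatrix_apply_self]
    split_ifs <;> simp
  rw [sldMatrix_apply_of_ne hab, sldMatrix_apply_of_ne hab.symm, add_comm (P b)]
  split_ifs
  · have hba : ((P b - P a) / (P a + P b) : ℝ) = -((P a - P b) / (P a + P b)) := by ring
    rw [hba, star_mul', star_apply_of_conjTranspose_eq_neg hK]
    simp
  · simp

lemma sldMatrix_sld_equation [Fintype ι] (hP : ∀ a, 0 ≤ P a) (hP' : ∀ a, P a = 0 → P' a = 0) :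
    (1 / 2 : ℂ) • (diagonal (fun a => (P a : ℂ)) * sldMatrix P P' K +
        sldMatrix P P' K * diagonal (fun a => (P a : ℂ))) =
      diagonal (fun a => (P' a : ℂ)) +
        (diagonal (fun a => (P a : ℂ)) * K - K * diagonal (fun a => (P a : ℂ))) := by
  ext a b
  simp only [Matrix.smul_apply, Matrix.add_apply, Matrix.sub_apply, diagonal_mul, mul_diagonal,
    smul_eq_mul]
  rcases eq_or_ne a b with rfl | hab
  · rw [sldMatrix_apply_self, diagonal_apply_eq]
    split_ifs with ha
    · have : (P a : ℂ) ≠ 0 := Complex.ofReal_ne_zero.mpr ha.ne'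
      push_cast
      field_simp
      ring
    · have h0 : P a = 0 := le_antisymm (not_lt.mp ha) (hP a)
      simp [h0, hP' a h0]
  · rw [sldMatrix_apply_of_ne hab, diagonal_apply_ne _ hab]
    split_ifs with hs
    · have : (P a : ℂ) + P b ≠ 0 := by exact_mod_cast hs.ne'
      push_cast
      field_simp
      ring
    · have ha : P a = 0 := by linarith [hP a, hP b]
      have hb : P b = 0 := by linarith [hP a, hP b]
      simp [ha, hb]

lemma sldMatrix_mul_sldMatrix_of_ne (hK : Kᴴ = -K) {a b : ι} (hab : a ≠ b) :
    (P a + P b : ℂ) * (sldMatrix P P' K a b * sldMatrix P P' K b a) =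
      ((4 * if 0 < P a + P b then (P a - P b) ^ 2 / (P a + P b) * ‖K a b‖ ^ 2 else 0 : ℝ) : ℂ) := by
  rw [sldMatrix_apply_of_ne hab, sldMatrix_apply_of_ne hab.symm, add_comm (P b)]
  split_ifs with hs
  · have hK' : K b a = -star (K a b) := by
      rw [star_apply_of_conjTranspose_eq_neg hK b a, neg_neg]
    have hnorm : K a b * star (K a b) = ((‖K a b‖ ^ 2 : ℝ) : ℂ) := by
      rw [Complex.star_def, Complex.mul_conj, Complex.normSq_eq_norm_sq]
    have : (P a : ℂ) + P b ≠ 0 := by exact_mod_cast hs.ne'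
    rw [hK']
    linear_combination (norm := skip) (4 * ((P a : ℂ) - P b) ^ 2 / ((P a : ℂ) + P b)) * hnorm
    push_cast
    field_simp
    ring
  · simp

def sldFisherInfo [Fintype ι] [LinearOrder ι] (P P' : ι → ℝ) (K : Matrix ι ι ℂ) : ℝ :=
  (∑ k, if 0 < P k then P' k ^ 2 / P k else 0) +
    4 * ∑ j, ∑ k, if j < k ∧ 0 < P j + P k then (P j - P k) ^ 2 / (P j + P k) * ‖K j k‖ ^ 2 else 0

end SLD

lemma trace_diagonal_mul_sldMatrix_mul_sldMatrix {ι : Type*} [Fintype ι] [LinearOrder ι]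
    {P P' : ι → ℝ} {K : Matrix ι ι ℂ} (hK : Kᴴ = -K) :
    (diagonal (fun a => (P a : ℂ)) * sldMatrix P P' K * sldMatrix P P' K).trace =
      sldFisherInfo P P' K := by
  have hdiag (a : ι) : (P a : ℂ) * sldMatrix P P' K a a * sldMatrix P P' K a a =
      ((if 0 < P a then P' a ^ 2 / P a else 0 : ℝ) : ℂ) := by
    rw [sldMatrix_apply_self]
    split_ifs with ha
    · have : (P a : ℂ) ≠ 0 := Complex.ofReal_ne_zero.mpr ha.ne'
      push_cast
      field_simp
    · simp
  have hoff (a b : ι) : (if a < b then (P a : ℂ) * sldMatrix P P' K a b * sldMatrix P P' K b a +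
      P b * sldMatrix P P' K b a * sldMatrix P P' K a b else 0) =
      ((4 * if a < b ∧ 0 < P a + P b then (P a - P b) ^ 2 / (P a + P b) * ‖K a b‖ ^ 2
        else 0 : ℝ) : ℂ) := by
    by_cases hab : a < b
    · rw [if_pos hab, ite_and, if_pos hab, ← sldMatrix_mul_sldMatrix_of_ne hK hab.ne]
      ring
    · simp [hab]
  simp only [Matrix.trace, Matrix.diag, mul_apply, diagonal_apply, ite_mul, zero_mul, sum_ite_eq,
    mem_univ, if_true]
  rw [sum_sum_eq_sum_diag_add_sum_lt]
  simp only [hdiag, hoff, sldFisherInfo]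
  push_cast
  simp [mul_sum]

section Frame

variable {d : ℕ}

lemma star_inn (x y : Fin d → ℂ) : star (inn x y) = inn y x := by
  simp [inn, mul_comm]

lemma HasDerivAt.inn {x y : ℝ → Fin d → ℂ} {x' y' : Fin d → ℂ} {t : ℝ}
    (hx : HasDerivAt x x' t) (hy : HasDerivAt y y' t) :
    HasDerivAt (fun s => _root_.inn (x s) (y s)) (_root_.inn x' (y t) + _root_.inn (x t) y') t := by
  simp only [_root_.inn, ← sum_add_distrib]
  refine HasDerivAt.fun_sum fun i _ => ?_
  simpa only [starRingEnd_apply] using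
    (hasDerivAt_pi.mp hx i).star.fun_mul (hasDerivAt_pi.mp hy i)

lemma conjTranspose_eq_neg_of_orthonormal {w : Fin d → ℝ → Fin d → ℂ} {w' : Fin d → Fin d → ℂ}
    {t : ℝ} (horth : ∀ s j k, inn (w j s) (w k s) = if j = k then 1 else 0)
    (hw : ∀ k, HasDerivAt (w k) (w' k) t) :
    (Matrix.of fun a b => inn (w' a) (w b t))ᴴ = -Matrix.of fun a b => inn (w' a) (w b t) := by
  ext a b
  have hconst : HasDerivAt (fun s => inn (w a s) (w b s)) 0 t := by
    simpa only [horth] using hasDerivAt_const t (if a = b then (1 : ℂ) else 0)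
  have hsum := ((hw a).inn (hw b)).unique hconst
  rw [conjTranspose_apply, of_apply, star_inn, neg_apply, of_apply]
  linear_combination hsum

def ofCols (u : Fin d → Fin d → ℂ) : Matrix (Fin d) (Fin d) ℂ := (Matrix.of u)ᵀ

lemma conjTranspose_ofCols_mul_ofCols (u v : Fin d → Fin d → ℂ) :
    (ofCols u)ᴴ * ofCols v = Matrix.of fun a b => inn (u a) (v b) := by
  ext a b
  simp [ofCols, mul_apply, inn]

lemma conjTranspose_ofCols_mul_ofCols_self {u : Fin d → Fin d → ℂ}
    (horth : ∀ j k, inn (u j) (u k) = if j = k then 1 else 0) : (ofCols u)ᴴ * ofCols u = 1 := by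
  ext a b
  rw [conjTranspose_ofCols_mul_ofCols, of_apply, horth, one_apply]

lemma ofCols_mul_mul_conjTranspose (u v : Fin d → Fin d → ℂ) (M : Matrix (Fin d) (Fin d) ℂ) :
    ofCols u * M * (ofCols v)ᴴ = ∑ a, ∑ b, M a b • vecMulVec (u a) (star (v b)) := by
  ext i j
  simp only [ofCols, mul_apply, Matrix.sum_apply, Matrix.smul_apply, vecMulVec_apply, sum_mul,
    conjTranspose_apply, transpose_apply, of_apply, smul_eq_mul, Pi.star_apply]
  rw [sum_comm]
  exact sum_congr rfl fun a _ => sum_congr rfl fun b _ => by ring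

lemma ofCols_mul_diagonal_mul_conjTranspose (u v : Fin d → Fin d → ℂ) (f : Fin d → ℂ) :
    ofCols u * diagonal f * (ofCols v)ᴴ = ∑ k, f k • vecMulVec (u k) (star (v k)) := by
  simp [ofCols_mul_mul_conjTranspose, diagonal_apply, ite_smul]

lemma ofCols_mul_sldMatrix_mul_conjTranspose (u : Fin d → Fin d → ℂ) (P P' : Fin d → ℝ)
    (K : Matrix (Fin d) (Fin d) ℂ) :
    ofCols u * sldMatrix P P' K * (ofCols u)ᴴ =
      (∑ k, if 0 < P k then
          ((P' k / P k : ℝ) : ℂ) • vecMulVec (u k) (star (u k)) else 0)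
      + (2 : ℂ) • ∑ j, ∑ k, (if j ≠ k ∧ 0 < P j + P k then
          (((P j - P k) / (P j + P k) : ℝ) : ℂ) •
            K j k • vecMulVec (u j) (star (u k)) else 0) := by
  rw [sldMatrix, Matrix.mul_add, Matrix.add_mul, ofCols_mul_diagonal_mul_conjTranspose,
    Matrix.mul_smul, Matrix.smul_mul, ofCols_mul_mul_conjTranspose]
  simp only [ite_smul, zero_smul, of_apply, smul_smul]

end Frame

theorem explicit_sld_general {d : ℕ}
    (p : Fin d → ℝ → ℝ) (w : Fin d → ℝ → (Fin d → ℂ))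
    (p' : Fin d → ℝ → ℝ) (w' : Fin d → ℝ → (Fin d → ℂ))
    (horth : ∀ θ (j k : Fin d), inn (w j θ) (w k θ) = if j = k then 1 else 0)
    (hpnn : ∀ (k : Fin d) θ, 0 ≤ p k θ)
    (hp' : ∀ (k : Fin d) θ, HasDerivAt (p k) (p' k θ) θ)
    (hw' : ∀ (k : Fin d) θ, HasDerivAt (w k) (w' k θ) θ)
    (hdich : ∀ k : Fin d, (∀ θ, 0 < p k θ) ∨ (∀ θ, p k θ = 0))
    (ρ : ℝ → Matrix (Fin d) (Fin d) ℂ)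
    (hρ : ∀ θ, ρ θ = ∑ k, (p k θ : ℂ) • Matrix.vecMulVec (w k θ) (star (w k θ)))
    (lamt : ℝ → Matrix (Fin d) (Fin d) ℂ)
    (hlamt : ∀ θ, lamt θ =
      (∑ k, if 0 < p k θ then
          ((p' k θ / p k θ : ℝ) : ℂ) • Matrix.vecMulVec (w k θ) (star (w k θ)) else 0)
      + (2 : ℂ) • ∑ j, ∑ k, (if j ≠ k ∧ 0 < p j θ + p k θ then
          (((p j θ - p k θ) / (p j θ + p k θ) : ℝ) : ℂ) •
            inn (w' j θ) (w k θ) • Matrix.vecMulVec (w j θ) (star (w k θ)) else 0)) :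
    ∀ θ : ℝ,
      (lamt θ).IsHermitian ∧
      (∀ i j : Fin d, HasDerivAt (fun t => ρ t i j)
          (((1 / 2 : ℂ) • (ρ θ * lamt θ + lamt θ * ρ θ)) i j) θ) ∧
      (ρ θ * lamt θ * lamt θ).trace =
        (((∑ k, if 0 < p k θ then (p' k θ) ^ 2 / p k θ else 0)
          + 4 * ∑ j, ∑ k, (if j < k ∧ 0 < p j θ + p k θ then
              (p j θ - p k θ) ^ 2 / (p j θ + p k θ) *
                ‖inn (w' j θ) (w k θ)‖ ^ 2 else 0) : ℝ) : ℂ) := by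
  intro θ
  set U := ofCols (w · θ)
  set V := ofCols (w' · θ)
  set D := diagonal fun k => (p k θ : ℂ)
  set K := Matrix.of fun a b => inn (w' a θ) (w b θ)
  set L := sldMatrix (p · θ) (p' · θ) K
  have hU : Uᴴ * U = 1 := conjTranspose_ofCols_mul_ofCols_self (horth θ)
  have hK : Kᴴ = -K := conjTranspose_eq_neg_of_orthonormal horth (hw' · θ)
  have hP' (k : Fin d) (hk : p k θ = 0) : p' k θ = 0 := by
    rcases hdich k with hpos | hzero
    · exact absurd hk (hpos θ).ne'
    · exact (hp' k θ).unique (by simpa only [funext hzero] using hasDerivAt_const θ (0 : ℝ))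
  have hρθ : ρ θ = U * D * Uᴴ := by rw [hρ, ofCols_mul_diagonal_mul_conjTranspose]
  have hlam : lamt θ = U * L * Uᴴ :=
    (hlamt θ).trans (ofCols_mul_sldMatrix_mul_conjTranspose ..).symm
  refine ⟨hlam ▸ isHermitian_mul_mul_conjTranspose U (isHermitian_sldMatrix hK), fun i j => ?_, ?_⟩
  · have hderiv : U * diagonal (fun k => (p' k θ : ℂ)) * Uᴴ + V * D * Uᴴ + U * D * Vᴴ =
        (1 / 2 : ℂ) • (ρ θ * lamt θ + lamt θ * ρ θ) := by
      rw [hρθ, hlam]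
      exact half_anticommutator_conj hU (conjTranspose_ofCols_mul_ofCols _ _) hK
        (sldMatrix_sld_equation (hpnn · θ) hP')
    rw [← hderiv, funext hρ]
    convert hasDerivAt_sum_smul_vecMulVec_apply (hp' · θ) (hw' · θ) i j using 2
    simp only [U, V, D, ofCols_mul_diagonal_mul_conjTranspose, ← sum_add_distrib, smul_add,
      add_assoc]
  · rw [hρθ, hlam, trace_conj_mul_conj_mul_conj hU]
    exact trace_diagonal_mul_sldMatrix_mul_sldMatrix hK

/-- **Explicit SLD and the value of the SLD quantum information.**
The matrix `λ̃_θ` is Hermitian, solves the SLD equation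
`dρ_θ/dθ = (1/2)(ρ_θ λ̃_θ + λ̃_θ ρ_θ)` (entrywise), and `tr(ρ_θ λ̃_θ²) = H(θ)`. -/
theorem explicit_sld {d : ℕ} (hd : 1 ≤ d)
    (p : Fin d → ℝ → ℝ) (w : Fin d → ℝ → (Fin d → ℂ))
    (p' : Fin d → ℝ → ℝ) (w' : Fin d → ℝ → (Fin d → ℂ))
    (horth : ∀ θ (j k : Fin d), inn (w j θ) (w k θ) = if j = k then 1 else 0)
    (hpnn : ∀ (k : Fin d) θ, 0 ≤ p k θ) (hpsum : ∀ θ, ∑ k, p k θ = 1)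
    (hp' : ∀ (k : Fin d) θ, HasDerivAt (p k) (p' k θ) θ)
    (hw' : ∀ (k : Fin d) θ, HasDerivAt (w k) (w' k θ) θ)
    (hdich : ∀ k : Fin d, (∀ θ, 0 < p k θ) ∨ (∀ θ, p k θ = 0))
    (ρ : ℝ → Matrix (Fin d) (Fin d) ℂ)
    (hρ : ∀ θ, ρ θ = ∑ k, (p k θ : ℂ) • Matrix.vecMulVec (w k θ) (star (w k θ)))
    (lamt : ℝ → Matrix (Fin d) (Fin d) ℂ)
    (hlamt : ∀ θ, lamt θ =
      (∑ k, if 0 < p k θ then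
          ((p' k θ / p k θ : ℝ) : ℂ) • Matrix.vecMulVec (w k θ) (star (w k θ)) else 0)
      + (2 : ℂ) • ∑ j, ∑ k, (if j ≠ k ∧ 0 < p j θ + p k θ then
          (((p j θ - p k θ) / (p j θ + p k θ) : ℝ) : ℂ) •
            inn (w' j θ) (w k θ) • Matrix.vecMulVec (w j θ) (star (w k θ)) else 0)) :
    ∀ θ : ℝ,
      (lamt θ).IsHermitian ∧
      (∀ i j : Fin d, HasDerivAt (fun t => ρ t i j)
          (((1 / 2 : ℂ) • (ρ θ * lamt θ + lamt θ * ρ θ)) i j) θ) ∧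
      (ρ θ * lamt θ * lamt θ).trace =
        (((∑ k, if 0 < p k θ then (p' k θ) ^ 2 / p k θ else 0)
          + 4 * ∑ j, ∑ k, (if j < k ∧ 0 < p j θ + p k θ then
              (p j θ - p k θ) ^ 2 / (p j θ + p k θ) *
                ‖inn (w' j θ) (w k θ)‖ ^ 2 else 0) : ℝ) : ℂ) :=
  explicit_sld_general p w p' w' horth hpnn hp' hw' hdich ρ hρ lamt hlamt
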